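/- Let L : ℝ^(m×n) → ℝ be differentiable and satisfy the Polyak–Łojasiewicz inequality with parameter β > 0 on a set W, i.e., (1/2)‖∇L(W)‖_F² ≥ β(L(W) − L*) for all W ∈ W, where L* = inf L. Let F(θ) := L(W(θ)) for a differentiable map W : ℝ^p → ℝ^(m×n) with Jacobian J(θ) ∈ ℝ^(mn×p). If σ_min(J(θ)) ≥ γ > 0 for all θ in a domain whose image under W lies in W, then F satisfies the PL inequality on that domain with parameter βγ²: (1/2)‖∇F(θ)‖² ≥ βγ²(F(θ) − L*). -/

import Mathlib

open scoped RealInnerProductSpace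

/-
The chain rule for gradients reads `∇(L ∘ W)(θ) = J(θ)* ∇L(W θ)`, where `J(θ)*` is the adjoint of
the derivative of `W`. The lower bound `γ‖v‖ ≤ ‖J(θ)* v‖` therefore gives
`‖∇(L ∘ W)(θ)‖² ≥ γ² ‖∇L(W θ)‖²`, and the PL inequality for `L` at `W θ` finishes the proof.
-/

section GradientChainRule

variable {E F : Type*} [NormedAddCommGroup E] [InnerProductSpace ℝ E] [CompleteSpace E]
  [NormedAddCommGroup F] [InnerProductSpace ℝ F] [CompleteSpace F]

theorem HasGradientAt.comp_hasFDerivAt {L : F → ℝ} {W : E → F} {g : F} {W' : E →L[ℝ] F} {θ : E}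
    (hL : HasGradientAt L g (W θ)) (hW : HasFDerivAt W W' θ) :
    HasGradientAt (fun θ' => L (W θ')) (ContinuousLinearMap.adjoint W' g) θ := by
  rw [hasGradientAt_iff_hasFDerivAt] at hL ⊢
  refine (hL.comp θ hW).congr_fderiv ?_
  ext v
  simp [ContinuousLinearMap.adjoint_inner_left]

theorem gradient_comp {L : F → ℝ} {W : E → F} {θ : E}
    (hL : DifferentiableAt ℝ L (W θ)) (hW : DifferentiableAt ℝ W θ) :
    gradient (fun θ' => L (W θ')) θ =
      ContinuousLinearMap.adjoint (fderiv ℝ W θ) (gradient L (W θ)) :=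
  (hL.hasGradientAt.comp_hasFDerivAt hW.hasFDerivAt).gradient

end GradientChainRule

theorem pl_composition_general
    {m n p : ℕ}
    (L : EuclideanSpace ℝ (Fin m × Fin n) → ℝ)
    (S : Set (EuclideanSpace ℝ (Fin m × Fin n)))
    (β Lstar : ℝ)
    (hLdiff : ∀ W ∈ S, DifferentiableAt ℝ L W)
    (hPL : ∀ W ∈ S, (1 / 2) * ‖gradient L W‖ ^ 2 ≥ β * (L W - Lstar))
    (Wmap : EuclideanSpace ℝ (Fin p) → EuclideanSpace ℝ (Fin m × Fin n))
    (hWdiff : Differentiable ℝ Wmap)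
    (D : Set (EuclideanSpace ℝ (Fin p)))
    (hmap : ∀ θ ∈ D, Wmap θ ∈ S)
    (γ : ℝ) (hγ : 0 < γ)
    (hσ : ∀ θ ∈ D, ∀ v : EuclideanSpace ℝ (Fin m × Fin n),
      γ * ‖v‖ ≤ ‖ContinuousLinearMap.adjoint (fderiv ℝ Wmap θ) v‖) :
    ∀ θ ∈ D,
      (1 / 2) * ‖gradient (fun θ' => L (Wmap θ')) θ‖ ^ 2 ≥
        β * γ ^ 2 * (L (Wmap θ) - Lstar) := by
  intro θ hθ
  have hWθ := hmap θ hθ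
  set g := gradient L (Wmap θ)
  have hJ : γ ^ 2 * ‖g‖ ^ 2 ≤ ‖ContinuousLinearMap.adjoint (fderiv ℝ Wmap θ) g‖ ^ 2 := by
    rw [← mul_pow]
    exact pow_le_pow_left₀ (by positivity) (hσ θ hθ g) 2
  rw [gradient_comp (hLdiff _ hWθ) (hWdiff θ)]
  calc β * γ ^ 2 * (L (Wmap θ) - Lstar)
      = γ ^ 2 * (β * (L (Wmap θ) - Lstar)) := by ring
    _ ≤ γ ^ 2 * ((1 / 2) * ‖g‖ ^ 2) :=
      mul_le_mul_of_nonneg_left (hPL _ hWθ) (by positivity)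
    _ ≤ (1 / 2) * ‖ContinuousLinearMap.adjoint (fderiv ℝ Wmap θ) g‖ ^ 2 := by linarith

/-- **PL is preserved under composition with a map whose Jacobian has singular
values bounded below.** If `L` is differentiable and satisfies the PL inequality
with parameter `β > 0` on a set `S` (with `Lstar` the infimum of `L` on `S`),
`Wmap` is differentiable, maps the domain `D` into `S`, and at every `θ ∈ D` the
Jacobian `J θ = fderiv ℝ Wmap θ` satisfies `‖Jᵀ v‖ ≥ γ ‖v‖` (i.e.
`σ_min(J θ) ≥ γ > 0`), then `F = L ∘ Wmap` satisfies the PL inequality on `D`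
with parameter `β * γ²`. -/
theorem pl_composition
    {m n p : ℕ}
    (L : EuclideanSpace ℝ (Fin m × Fin n) → ℝ)
    (S : Set (EuclideanSpace ℝ (Fin m × Fin n)))
    (β Lstar : ℝ) (hβ : 0 < β)
    (hLdiff : ∀ W ∈ S, DifferentiableAt ℝ L W)
    (hLstar : IsGLB (L '' S) Lstar)
    (hPL : ∀ W ∈ S, (1 / 2) * ‖gradient L W‖ ^ 2 ≥ β * (L W - Lstar))
    (Wmap : EuclideanSpace ℝ (Fin p) → EuclideanSpace ℝ (Fin m × Fin n))
    (hWdiff : Differentiable ℝ Wmap)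
    (D : Set (EuclideanSpace ℝ (Fin p)))
    (hmap : ∀ θ ∈ D, Wmap θ ∈ S)
    (γ : ℝ) (hγ : 0 < γ)
    (hσ : ∀ θ ∈ D, ∀ v : EuclideanSpace ℝ (Fin m × Fin n),
      γ * ‖v‖ ≤ ‖ContinuousLinearMap.adjoint (fderiv ℝ Wmap θ) v‖) :
    ∀ θ ∈ D,
      (1 / 2) * ‖gradient (fun θ' => L (Wmap θ')) θ‖ ^ 2 ≥
        β * γ ^ 2 * (L (Wmap θ) - Lstar) :=
  pl_composition_general L S β Lstar hLdiff hPL Wmap hWdiff D hmap γ hγ hσ
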